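/- arXiv:0811.0977 — 2 statements merged into one kernel-verified Lean document; each statement's English description precedes it below -/
import Mathlib

section
/- (Three-component unnesting.) Let π : Set X × Set Y → Set X, ρ : Set X × Set Y → Set Y, and σ : Set X × Set Z → Set Z all be monotone in each argument. Define R∞(P) = lfp(R ↦ ρ(P,R)), P∞ = lfp(P ↦ π(P,R∞(P))), and S∞ = lfp(S ↦ σ(P∞,S)). Let (P*,R*,S*) be the least simultaneous fixed point of (P,R,S) ↦ (π(P,R), ρ(P,R), σ(P,S)). Then P* = P∞, R* = R∞(P*), and S* = S∞. -/
/-!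
The nested triple `(P∞, R∞ P∞, S∞)` is a fixed point of the simultaneous map, so it lies above
`(P*, R*, S*)`. Conversely, any simultaneous fixed point `(P, R)` of `(π, ρ)` satisfies
`R∞ P ≤ R`, hence `π (P, R∞ P) ≤ P` and `P∞ ≤ P`; for `(P*, R*)` this gives `P* = P∞`,
after which `R*` and `S*` are squeezed between the same least fixed points.
-/

section LeastFixedPoint

variable {α β : Type*}

/-- A least fixed point coincides with `OrderHom.lfp`, which is the least prefixed point. -/
theorem IsLeast.le_of_map_le [CompleteLattice α] {f : α → α} (hf : Monotone f) {a : α}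
    (ha : IsLeast {x | f x = x} a) {b : α} (hb : f b ≤ b) : a ≤ b :=
  (ha.2 (OrderHom.map_lfp ⟨f, hf⟩)).trans (OrderHom.lfp_le _ hb)

theorem Monotone.comp_prodMk_left [Preorder α] [Preorder β] {γ : Type*} [Preorder γ]
    {f : α × β → γ} (hf : Monotone f) (p : α) : Monotone fun r => f (p, r) :=
  hf.comp (monotone_const.prodMk monotone_id)

theorem monotone_of_isLeast_fixedPoints [Preorder α] [CompleteLattice β] {f : α × β → β}
    (hf : Monotone f) {g : α → β} (hg : ∀ p, IsLeast {r | f (p, r) = r} (g p)) : Monotone g :=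
  fun p p' hpp' => (hg p).le_of_map_le (hf.comp_prodMk_left p) <|
    (hf (Prod.mk_le_mk.2 ⟨hpp', le_rfl⟩)).trans (hg p').1.le

theorem nested_lfp_le_of_map_le [CompleteLattice α] [CompleteLattice β]
    {π : α × β → α} {ρ : α × β → β} (hπ : Monotone π) (hρ : Monotone ρ)
    {Rinf : α → β} (hRinf : ∀ P, IsLeast {R | ρ (P, R) = R} (Rinf P))
    {Pinf : α} (hPinf : IsLeast {P | π (P, Rinf P) = P} Pinf)
    {P : α} {R : β} (hP : π (P, R) ≤ P) (hR : ρ (P, R) ≤ R) : Pinf ≤ P ∧ Rinf P ≤ R := by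
  have hRinf_le : Rinf P ≤ R := (hRinf P).le_of_map_le (hρ.comp_prodMk_left P) hR
  have hπRinf : Monotone fun P => π (P, Rinf P) :=
    fun P P' h => hπ (Prod.mk_le_mk.2 ⟨h, monotone_of_isLeast_fixedPoints hρ hRinf h⟩)
  exact ⟨hPinf.le_of_map_le hπRinf ((hπ (Prod.mk_le_mk.2 ⟨le_rfl, hRinf_le⟩)).trans hP),
    hRinf_le⟩

end LeastFixedPoint

theorem three_component_unnesting {X Y Z : Type*}
    (π : Set X × Set Y → Set X) (ρ : Set X × Set Y → Set Y)
    (σ : Set X × Set Z → Set Z)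
    (hπ : Monotone π) (hρ : Monotone ρ) (hσ : Monotone σ)
    (Rinf : Set X → Set Y)
    (hRinf : ∀ P, IsLeast {R | ρ (P, R) = R} (Rinf P))
    (Pinf : Set X) (hPinf : IsLeast {P | π (P, Rinf P) = P} Pinf)
    (Sinf : Set Z) (hSinf : IsLeast {S | σ (Pinf, S) = S} Sinf)
    (Pstar : Set X) (Rstar : Set Y) (Sstar : Set Z)
    (hstar : IsLeast
      {t : Set X × Set Y × Set Z |
        (π (t.1, t.2.1), ρ (t.1, t.2.1), σ (t.1, t.2.2)) = t}
      (Pstar, Rstar, Sstar)) :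
    Pstar = Pinf ∧ Rstar = Rinf Pstar ∧ Sstar = Sinf := by
  obtain ⟨hfix, hleast⟩ := hstar
  obtain ⟨hP, hR, hS⟩ : π (Pstar, Rstar) = Pstar ∧ ρ (Pstar, Rstar) = Rstar ∧
      σ (Pstar, Sstar) = Sstar := by simpa only [Set.mem_ofPred_eq, Prod.mk.injEq] using hfix
  obtain ⟨hP_le, hR_le, hS_le⟩ : Pstar ≤ Pinf ∧ Rstar ≤ Rinf Pinf ∧ Sstar ≤ Sinf :=
    hleast (a := (Pinf, Rinf Pinf, Sinf)) (Prod.ext hPinf.1 (Prod.ext (hRinf Pinf).1 hSinf.1))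
  obtain ⟨hPinf_le, hRinf_le⟩ := nested_lfp_le_of_map_le hπ hρ hRinf hPinf hP.le hR.le
  obtain rfl : Pstar = Pinf := le_antisymm hP_le hPinf_le
  exact ⟨rfl, le_antisymm hR_le hRinf_le,
    le_antisymm hS_le (hSinf.le_of_map_le (hσ.comp_prodMk_left Pstar) hS.le)⟩
end

section
/- Fix x : ℕ and let Y = {(u,v) : ∀ w < u, w·v = x → (w = 1 ∨ w = x)}. Define the monotone operator Δ on Set (ℕ × ℕ) by Δ(X') = {(u,v) : v = 0 ∨ ∃ w, v = w+1 ∧ (u,w) ∈ X' ∧ (u,w) ∈ Y}. Then a natural number x > 1 satisfies (x,x) ∈ lfp Δ if and only if x is prime. -/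
/-!
The least fixed point of `Δ` is `{(u, v) | ∀ k < v, (u, k) ∈ Y}`: it is a prefixed point of `Δ`,
and conversely `(u, v)` is forced into every prefixed point by induction on `v`. At `(x, x)` this
says that no `w < x` other than `1` has a cofactor `k < x`, which for `x > 1` is primality.
-/

section LfpCountingUp

variable {Y : Set (ℕ × ℕ)} {Δ : Set (ℕ × ℕ) → Set (ℕ × ℕ)} (hΔ : Monotone Δ)
  (hdef : ∀ X', Δ X' = {p : ℕ × ℕ | p.2 = 0 ∨ ∃ w, p.2 = w + 1 ∧ (p.1, w) ∈ X' ∧ (p.1, w) ∈ Y})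
include hdef

theorem lfp_le_setOf_forall_lt :
    OrderHom.lfp ⟨Δ, hΔ⟩ ≤ {p : ℕ × ℕ | ∀ k < p.2, (p.1, k) ∈ Y} := by
  refine OrderHom.lfp_le _ fun ⟨u, v⟩ hp k hk => ?_
  rw [OrderHom.coe_mk, hdef] at hp
  rcases hp with hzero | ⟨w, rfl, hX, hY⟩
  · exact absurd hk (hzero ▸ Nat.not_lt_zero k)
  · rcases Nat.lt_succ_iff_lt_or_eq.mp hk with hlt | rfl
    exacts [hX k hlt, hY]

theorem mem_lfp_of_forall_lt (u : ℕ) :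
    ∀ v, (∀ k < v, (u, k) ∈ Y) → (u, v) ∈ OrderHom.lfp ⟨Δ, hΔ⟩
  | 0, _ => by
    rw [← OrderHom.map_lfp, OrderHom.coe_mk, hdef]
    exact Or.inl rfl
  | v + 1, hv => by
    rw [← OrderHom.map_lfp, OrderHom.coe_mk, hdef]
    exact Or.inr ⟨v, rfl, mem_lfp_of_forall_lt u v fun k hk => hv k (by omega), hv v v.lt_succ_self⟩

theorem mem_lfp_iff_forall_lt (u v : ℕ) :
    (u, v) ∈ OrderHom.lfp ⟨Δ, hΔ⟩ ↔ ∀ k < v, (u, k) ∈ Y :=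
  ⟨fun h => lfp_le_setOf_forall_lt hΔ hdef h, mem_lfp_of_forall_lt hΔ hdef u v⟩

end LfpCountingUp

theorem Nat.prime_iff_forall_mul_eq_of_lt {x : ℕ} (hx : 1 < x) :
    Nat.Prime x ↔ ∀ k < x, ∀ w < x, w * k = x → w = 1 ∨ w = x := by
  refine ⟨fun hp k _ w _ hwk => hp.eq_one_or_self_of_dvd w ⟨k, hwk.symm⟩, fun h => ?_⟩
  refine Nat.prime_def_lt.mpr ⟨hx, fun w hw ⟨k, hwk⟩ => ?_⟩
  have hw0 : w ≠ 0 := by rintro rfl; omega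
  have hk0 : k ≠ 0 := by rintro rfl; omega
  by_contra hw1
  have hk : k < x := by
    calc k < 2 * k := by omega
      _ ≤ w * k := Nat.mul_le_mul_right k (by omega)
      _ = x := hwk.symm
  rcases h k hk w hw hwk.symm with h1 | hwx <;> omega

theorem prime_via_lfp (x : ℕ) (Δ : Set (ℕ × ℕ) → Set (ℕ × ℕ))
    (hΔ : Monotone Δ)
    (hdef : ∀ X', Δ X' = {p : ℕ × ℕ | p.2 = 0 ∨
      ∃ w, p.2 = w + 1 ∧ (p.1, w) ∈ X' ∧
        (p.1, w) ∈ {q : ℕ × ℕ | ∀ w' < q.1, w' * q.2 = x → (w' = 1 ∨ w' = x)}})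
    (hx : 1 < x) :
    (x, x) ∈ OrderHom.lfp ⟨Δ, hΔ⟩ ↔ Nat.Prime x := by
  rw [mem_lfp_iff_forall_lt hΔ hdef, Nat.prime_iff_forall_mul_eq_of_lt hx]
  rfl
end
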